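/- Any two monad structures on the ultrafilter endofunctor of the category of sets coincide. Moreover, for every monad S on the category of sets whose underlying endofunctor preserves finite coproducts, there exists exactly one morphism of monads from S to the ultrafilter monad; that is, the ultrafilter monad is terminal among finite-coproduct-preserving monads on Set. -/

import Mathlib

open CategoryTheory

universe u

/-- The ultrafilter endofunctor on the category of sets. -/
def ultrafilterFunctor : Type u ⥤ Type u where
  obj X := Ultrafilter X
  map f := TypeCat.ofHom (Ultrafilter.map f)
  map_id _ := by apply ConcreteCategory.hom_ext; intro U; exact Ultrafilter.map_id U
  map_comp f g := by apply ConcreteCategory.hom_ext; intro U; exact (Ultrafilter.map_map U f g).symm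

/-! ### Auxiliary material: Börger's theorem on the terminality of the ultrafilter monad -/

namespace Stmt6Aux

open CategoryTheory Limits

noncomputable section

/-- The `n`-element type in `Type u`. -/
abbrev TT (n : ℕ) : Type u := ULift (Fin n)

/-- The `j`-th coprojection into `TT n`. -/
def incl {n : ℕ} (j : Fin n) : PUnit.{u+1} → TT.{u} n := fun _ => ULift.up j

/-- The cofan exhibiting `TT n` as the `n`-fold coproduct of points. -/
def myCofan (n : ℕ) : Cofan (fun _ : Fin n => PUnit.{u+1}) :=
  Cofan.mk (TT.{u} n) (fun j => ↾(incl j))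

def myCofanIsColimit (n : ℕ) : IsColimit (myCofan.{u} n) :=
  mkCofanColimit _ (fun s => ↾(fun (x : TT.{u} n) => s.inj x.down PUnit.unit))
    (fun s j => ConcreteCategory.hom_ext _ _ fun _ => rfl)
    (fun s m hm => ConcreteCategory.hom_ext _ _ fun x => by
      have := ConcreteCategory.congr_hom (hm x.down) PUnit.unit
      exact this)

lemma cover (F : Type u ⥤ Type u) [Limits.PreservesFiniteCoproducts F] {n : ℕ}
    (y : F.obj (TT.{u} n)) :
    ∃ (j : Fin n) (z : F.obj PUnit), F.map (↾(incl j)) z = y := by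
  obtain ⟨⟨j⟩, z, hz⟩ := Types.jointly_surjective _
    (isColimitOfPreserves F (myCofanIsColimit.{u} n)) y
  exact ⟨j, z, hz⟩

lemma incl_eq (F : Type u ⥤ Type u) [Limits.PreservesFiniteCoproducts F] {n : ℕ}
    {j j' : Fin n} {z z' : F.obj PUnit}
    (h : F.map (↾(incl j)) z = F.map (↾(incl j')) z') : j = j' := by
  let t : Cocone (Discrete.functor (fun _ : Fin n => PUnit.{u+1}) ⋙ F) :=
    { pt := TT.{u} n
      ι := Discrete.natTrans fun i => ↾(fun _ => ULift.up i.as) }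
  have hd : ∀ (i : Fin n) (w : F.obj PUnit),
      (isColimitOfPreserves F (myCofanIsColimit.{u} n)).desc t (F.map (↾(incl i)) w)
        = ULift.up i := fun i w =>
    ConcreteCategory.congr_hom ((isColimitOfPreserves F (myCofanIsColimit.{u} n)).fac t ⟨i⟩) w
  have := TypeCat.congr_arg ((isColimitOfPreserves F (myCofanIsColimit.{u} n)).desc t) h
  rw [hd, hd] at this
  exact congrArg ULift.down this

open scoped Classical in
/-- Characteristic map of a set, into the two point type. -/
def chi {X : Type u} (A : Set X) : X → TT.{u} 2 :=
  fun x => if x ∈ A then ULift.up 0 else ULift.up 1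

variable (F : Type u ⥤ Type u)

/-- Membership predicate for the ultrafilter associated to `x : F.obj X`. -/
def memP {X : Type u} (x : F.obj X) (A : Set X) : Prop :=
  ∃ z, F.map (↾(chi A)) x = F.map (↾(incl 0)) z

lemma memP_iff [Limits.PreservesFiniteCoproducts F] {n : ℕ} {X : Type u} (x : F.obj X)
    (A : Set X) (h : X → TT.{u} n) (g : TT.{u} n → TT.{u} 2) (hA : chi A = g ∘ h)
    (j : Fin n) (z : F.obj PUnit) (hz : F.map (↾h) x = F.map (↾(incl j)) z) :
    memP F x A ↔ g (ULift.up j) = ULift.up 0 := by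
  have hgj : (g ∘ incl j : PUnit.{u+1} → TT.{u} 2) = incl (g (ULift.up j)).down :=
    funext fun _ => rfl
  have hkey : F.map (↾(chi A)) x = F.map (↾(incl (g (ULift.up j)).down)) z := by
    rw [hA, ← hgj]
    calc F.map (↾(g ∘ h)) x = F.map (↾h ≫ ↾g) x := rfl
      _ = F.map (↾g) (F.map (↾h) x) := FunctorToTypes.map_comp_apply F (↾h) (↾g) x
      _ = F.map (↾g) (F.map (↾(incl j)) z) := by rw [hz]
      _ = F.map (↾(incl j) ≫ ↾g) z := (FunctorToTypes.map_comp_apply F (↾(incl j)) (↾g) z).symm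
      _ = F.map (↾(g ∘ incl j)) z := rfl
  constructor
  · rintro ⟨z', hz'⟩
    have h0 : (0 : Fin 2) = (g (ULift.up j)).down := incl_eq F (hz'.symm.trans hkey)
    exact (congrArg ULift.up h0).symm
  · intro hg
    refine ⟨z, ?_⟩
    rw [hkey, hg]

/-- Lift a function between `Fin`s to the `TT`s. -/
def lft {n m : ℕ} (d : Fin n → Fin m) : TT.{u} n → TT.{u} m :=
  fun t => ULift.up (d t.down)

lemma lft_up_eq_iff {n m : ℕ} (d : Fin n → Fin m) (j : Fin n) (i : Fin m) :
    lft.{u} d (ULift.up j) = ULift.up i ↔ d j = i :=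
  ⟨fun h => congrArg ULift.down h, fun h => congrArg ULift.up h⟩

def dA3 : Fin 3 → Fin 2 := fun i => if i = 0 then 0 else 1
def dB3 : Fin 3 → Fin 2 := fun i => if i = 2 then 1 else 0
def dA4 : Fin 4 → Fin 2 := fun i => if i = 0 ∨ i = 1 then 0 else 1
def dB4 : Fin 4 → Fin 2 := fun i => if i = 0 ∨ i = 2 then 0 else 1
def dAB4 : Fin 4 → Fin 2 := fun i => if i = 0 then 0 else 1
def dSw : Fin 2 → Fin 2 := fun i => if i = 0 then 1 else 0
def dId : Fin 2 → Fin 2 := fun i => i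

variable [Limits.PreservesFiniteCoproducts F]

omit [Limits.PreservesFiniteCoproducts F] in
lemma memP_univ {X : Type u} (x : F.obj X) : memP F x Set.univ := by
  refine ⟨F.map (↾(fun _ => PUnit.unit)) x, ?_⟩
  have h1 : chi (Set.univ : Set X) = (incl 0 ∘ fun _ => PUnit.unit) := by
    funext x'; simp [chi, incl, Function.comp]
  rw [h1]
  exact FunctorToTypes.map_comp_apply F (↾(fun _ => PUnit.unit)) (↾(incl 0)) x

lemma memP_mono {X : Type u} (x : F.obj X) {A B : Set X} (hAB : A ⊆ B)
    (hA : memP F x A) : memP F x B := by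
  classical
  set h : X → TT.{u} 3 := fun x' =>
    if x' ∈ A then ULift.up 0 else if x' ∈ B then ULift.up 1 else ULift.up 2 with hh
  have hcA : chi A = lft dA3 ∘ h := by
    funext x'
    by_cases h1 : x' ∈ A <;> by_cases h2 : x' ∈ B <;>
      simp_all [chi, lft, dA3, dB3, Function.comp]
  have hcB : chi B = lft dB3 ∘ h := by
    funext x'
    by_cases h1 : x' ∈ A
    · have h2 := hAB h1
      simp_all [chi, lft, dA3, dB3, Function.comp]
    · by_cases h2 : x' ∈ B <;> simp_all [chi, lft, dA3, dB3, Function.comp]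
  obtain ⟨j, z, hz⟩ := cover F (F.map (↾h) x)
  have hjA := ((memP_iff F x A h (lft dA3) hcA j z hz.symm).mp hA)
  rw [lft_up_eq_iff] at hjA
  refine (memP_iff F x B h (lft dB3) hcB j z hz.symm).mpr ?_
  rw [lft_up_eq_iff]
  exact (by decide : ∀ j : Fin 3, dA3 j = 0 → dB3 j = 0) j hjA

lemma memP_inter {X : Type u} (x : F.obj X) {A B : Set X}
    (hA : memP F x A) (hB : memP F x B) : memP F x (A ∩ B) := by
  classical
  set h : X → TT.{u} 4 := fun x' =>
    if x' ∈ A then (if x' ∈ B then ULift.up 0 else ULift.up 1)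
    else (if x' ∈ B then ULift.up 2 else ULift.up 3) with hh
  have hcA : chi A = lft dA4 ∘ h := by
    funext x'
    by_cases h1 : x' ∈ A <;> by_cases h2 : x' ∈ B <;>
      simp_all [chi, lft, dA4, dB4, dAB4, Function.comp]
  have hcB : chi B = lft dB4 ∘ h := by
    funext x'
    by_cases h1 : x' ∈ A <;> by_cases h2 : x' ∈ B <;>
      simp_all [chi, lft, dA4, dB4, dAB4, Function.comp]
  have hcAB : chi (A ∩ B) = lft dAB4 ∘ h := by
    funext x'
    by_cases h1 : x' ∈ A <;> by_cases h2 : x' ∈ B <;>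
      simp_all [chi, lft, dA4, dB4, dAB4, Function.comp]
  obtain ⟨j, z, hz⟩ := cover F (F.map (↾h) x)
  have hjA := ((memP_iff F x A h (lft dA4) hcA j z hz.symm).mp hA)
  have hjB := ((memP_iff F x B h (lft dB4) hcB j z hz.symm).mp hB)
  rw [lft_up_eq_iff] at hjA hjB
  refine (memP_iff F x (A ∩ B) h (lft dAB4) hcAB j z hz.symm).mpr ?_
  rw [lft_up_eq_iff]
  exact (by decide : ∀ j : Fin 4, dA4 j = 0 → dB4 j = 0 → dAB4 j = 0) j hjA hjB

lemma memP_compl_not_iff {X : Type u} (x : F.obj X) (A : Set X) :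
    ¬ memP F x Aᶜ ↔ memP F x A := by
  classical
  have hcc : chi (Aᶜ) = lft dSw ∘ chi A := by
    funext x'
    by_cases h1 : x' ∈ A <;> simp_all [chi, lft, dSw, Function.comp]
  have hcA : chi A = lft dId ∘ chi A := by
    funext x'
    by_cases h1 : x' ∈ A <;> simp_all [chi, lft, dId, Function.comp]
  obtain ⟨j, z, hz⟩ := cover F (F.map (↾(chi A)) x)
  rw [memP_iff F x A (chi A) (lft dId) hcA j z hz.symm,
    memP_iff F x (Aᶜ) (chi A) (lft dSw) hcc j z hz.symm,
    lft_up_eq_iff, lft_up_eq_iff]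
  exact (by decide : ∀ j : Fin 2, (¬ dSw j = 0 ↔ dId j = 0)) j

/-- The ultrafilter on `X` associated to `x : F.obj X`, for a finite-coproduct
preserving endofunctor `F` of `Type u`. -/
def toU {X : Type u} (x : F.obj X) : Ultrafilter X :=
  Ultrafilter.ofComplNotMemIff
    { sets := {A | memP F x A}
      univ_sets := memP_univ F x
      sets_of_superset := fun h hsub => memP_mono F x hsub h
      inter_sets := fun hA hB => memP_inter F x hA hB }
    (fun A => memP_compl_not_iff F x A)

omit [Limits.PreservesFiniteCoproducts F] in
lemma chi_preimage {X Y : Type u} (f : X → Y) (B : Set Y) :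
    chi (f ⁻¹' B) = chi B ∘ f := by
  funext x'; by_cases h : f x' ∈ B <;> simp [chi, h]

lemma toU_natural {X Y : Type u} (f : X → Y) (x : F.obj X) :
    toU F (F.map (↾f) x) = Ultrafilter.map f (toU F x) := by
  ext B
  rw [Ultrafilter.mem_map]
  show memP F (F.map (↾f) x) B ↔ memP F x (f ⁻¹' B)
  have h1 : F.map (↾(chi B)) (F.map (↾f) x) = F.map (↾(chi (f ⁻¹' B))) x := by
    rw [chi_preimage]
    exact (FunctorToTypes.map_comp_apply F (↾f) (↾(chi B)) x).symm
  unfold memP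
  rw [h1]

/-! ### Uniqueness of natural families of ultrafilters -/

/-- Joint surjectivity of the two coprojections, the only hypothesis needed for the
uniqueness argument. -/
def Cov (G : Type u ⥤ Type u) : Prop :=
  ∀ y : G.obj (TT.{u} 2), ∃ (j : Fin 2) (z : G.obj PUnit), G.map (↾(incl j)) z = y

omit [Limits.PreservesFiniteCoproducts F] in
lemma chi_preimage_singleton {X : Type u} (A : Set X) :
    chi A ⁻¹' {ULift.up 0} = A := by
  ext x'
  by_cases h : x' ∈ A
  · simp [chi, h]
  · simp only [Set.mem_preimage, Set.mem_singleton_iff, chi, if_neg h, h, iff_false]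
    intro habs
    exact (by decide : ¬ (1 : Fin 2) = 0) (congrArg ULift.down habs)

/-- Core of the uniqueness argument: membership in any natural family of ultrafilters
is determined by which coprojection `G.map (chi A) x` factors through. -/
lemma mem_natural_iff {G : Type u ⥤ Type u}
    (a : ∀ X : Type u, G.obj X → Ultrafilter X)
    (ha : ∀ {X Y : Type u} (f : X → Y) (x : G.obj X),
      a Y (G.map (↾f) x) = Ultrafilter.map f (a X x))
    {X : Type u} (x : G.obj X) (A : Set X) {j : Fin 2} {z : G.obj PUnit}
    (hz : G.map (↾(chi A)) x = G.map (↾(incl j)) z) :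
    A ∈ a X x ↔ j = 0 := by
  have h1 : A ∈ a X x ↔ {(ULift.up 0 : TT.{u} 2)} ∈ a _ (G.map (↾(chi A)) x) := by
    rw [ha (chi A) x, Ultrafilter.mem_map, chi_preimage_singleton]
  rw [h1, hz, ha (incl j) z, Ultrafilter.mem_map]
  by_cases hj : j = 0
  · subst hj
    have : incl (0 : Fin 2) ⁻¹' {(ULift.up 0 : TT.{u} 2)} = Set.univ := by
      ext p; simp [incl]
    rw [this]
    exact iff_of_true Filter.univ_mem rfl
  · have hj1 : j = 1 := by omega
    subst hj1
    have : incl (1 : Fin 2) ⁻¹' {(ULift.up 0 : TT.{u} 2)} = (∅ : Set PUnit) := by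
      ext p
      simp only [Set.mem_preimage, Set.mem_singleton_iff, Set.mem_empty_iff_false,
        iff_false]
      intro habs
      exact (by decide : ¬ (1 : Fin 2) = 0) (congrArg ULift.down habs)
    rw [this]
    exact iff_of_false Ultrafilter.empty_notMem (by decide)

/-- Uniqueness of natural families of ultrafilters, given joint surjectivity. -/
lemma natural_unique {G : Type u ⥤ Type u} (hcov : Cov G)
    (a b : ∀ X : Type u, G.obj X → Ultrafilter X)
    (ha : ∀ {X Y : Type u} (f : X → Y) (x : G.obj X),
      a Y (G.map (↾f) x) = Ultrafilter.map f (a X x))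
    (hb : ∀ {X Y : Type u} (f : X → Y) (x : G.obj X),
      b Y (G.map (↾f) x) = Ultrafilter.map f (b X x))
    {X : Type u} (x : G.obj X) : a X x = b X x := by
  ext A
  obtain ⟨j, z, hz⟩ := hcov (G.map (↾(chi A)) x)
  rw [mem_natural_iff a ha x A hz.symm, mem_natural_iff b hb x A hz.symm]

/-! ### Coverage facts -/

lemma cov_id : Cov (𝟭 (Type u)) := fun y => ⟨y.down, PUnit.unit, rfl⟩

lemma cov_of_preserves : Cov F := fun y => by
  obtain ⟨j, z, hz⟩ := cover F y
  exact ⟨j, z, hz⟩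

lemma cov_comp_self : Cov (F ⋙ F) := fun y => by
  obtain ⟨⟨j⟩, z, hz⟩ := Types.jointly_surjective _
    (isColimitOfPreserves F (isColimitOfPreserves F (myCofanIsColimit.{u} 2))) y
  exact ⟨j, z, hz⟩

instance : Finite (Ultrafilter (TT.{u} 2)) :=
  Finite.of_surjective (pure : TT.{u} 2 → Ultrafilter (TT.{u} 2)) fun f => by
    obtain ⟨a, ha⟩ := f.eq_pure_of_finite
    exact ⟨a, ha.symm⟩

lemma cov_uu : Cov (ultrafilterFunctor.{u} ⋙ ultrafilterFunctor.{u}) := fun y => by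
  obtain ⟨V, hV⟩ := Ultrafilter.eq_pure_of_finite
    (show Ultrafilter (Ultrafilter (TT.{u} 2)) from y)
  obtain ⟨t, ht⟩ := V.eq_pure_of_finite
  refine ⟨t.down, show Ultrafilter (Ultrafilter PUnit.{u+1}) from pure (pure PUnit.unit), ?_⟩
  show Ultrafilter.map (Ultrafilter.map (incl t.down)) (pure (pure PUnit.unit)) = y
  rw [Ultrafilter.map_pure, Ultrafilter.map_pure]
  have : incl t.down PUnit.unit = t := rfl
  rw [this, ← ht]
  exact hV.symm

end

end Stmt6Aux

open Stmt6Aux in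
/-- Any two monad structures on the ultrafilter endofunctor of the category of sets
coincide.  Moreover, for every monad `S` on the category of sets whose underlying
endofunctor preserves finite coproducts, there exists exactly one morphism of monads from
`S` to the ultrafilter monad; that is, the ultrafilter monad is terminal among
finite-coproduct-preserving monads on `Set`. -/
theorem stmt6 :
    (∀ M M' : Monad (Type u),
      M.toFunctor = ultrafilterFunctor.{u} → M'.toFunctor = ultrafilterFunctor.{u} →
        M = M') ∧
    (∀ S : Monad (Type u), Limits.PreservesFiniteCoproducts S.toFunctor →
      ∃ φ : MonadHom S (ofTypeMonad Ultrafilter.{u}),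
        ∀ ψ : MonadHom S (ofTypeMonad Ultrafilter.{u}), ψ = φ) := by
  constructor
  · rintro ⟨F, η, μ, hassoc, hl, hr⟩ ⟨F', η', μ', hassoc', hl', hr'⟩ hM hM'
    dsimp only at hM hM'
    subst hM; subst hM'
    have hη : η = η' := by
      apply NatTrans.ext
      funext X; apply ConcreteCategory.hom_ext; intro x
      exact natural_unique cov_id
        (fun X x => η.app X x) (fun X x => η'.app X x)
        (fun f x => NatTrans.naturality_apply η (↾f) x)
        (fun f x => NatTrans.naturality_apply η' (↾f) x) x
    have hμ : μ = μ' := by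
      apply NatTrans.ext
      funext X; apply ConcreteCategory.hom_ext; intro x
      exact natural_unique cov_uu
        (fun X x => μ.app X x) (fun X x => μ'.app X x)
        (fun f x => NatTrans.naturality_apply μ (↾f) x)
        (fun f x => NatTrans.naturality_apply μ' (↾f) x) x
    subst hη; subst hμ
    rfl
  · intro S hS
    haveI := hS
    let a0 : ∀ X : Type u, S.toFunctor.obj X → Ultrafilter X :=
      fun _ x => toU S.toFunctor x
    let φnat : S.toFunctor ⟶ (ofTypeMonad Ultrafilter.{u}).toFunctor :=
      { app := fun X => ↾(fun x => toU S.toFunctor x)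
        naturality := fun X Y f => ConcreteCategory.hom_ext _ _ fun x => toU_natural S.toFunctor f x }
    have happη : ∀ (X : Type u) (x : X),
        toU S.toFunctor (S.η.app X x) = (pure x : Ultrafilter X) := by
      intro X x
      exact natural_unique cov_id
        (fun X x => toU S.toFunctor (S.η.app X x)) (fun X x => (pure x : Ultrafilter X))
        (fun {X Y} f x => by
          show toU S.toFunctor (S.η.app Y ((𝟭 (Type u)).map (↾f) x)) = _
          rw [NatTrans.naturality_apply S.η (↾f) x, toU_natural])
        (fun {X Y} f x => (Ultrafilter.map_pure f x).symm) x
    have happμ : ∀ (X : Type u) (x : S.toFunctor.obj (S.toFunctor.obj X)),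
        toU S.toFunctor (S.μ.app X x)
          = joinM (toU S.toFunctor
              (S.toFunctor.map (↾(fun y => toU S.toFunctor (X := X) y)) x)) := by
      intro X x
      refine natural_unique (cov_comp_self S.toFunctor)
        (fun X x => toU S.toFunctor (S.μ.app X x))
        (fun X x => joinM (toU S.toFunctor
          (S.toFunctor.map (↾(fun y => toU S.toFunctor (X := X) y)) x)))
        (fun {X Y} f x => by
          show toU S.toFunctor (S.μ.app Y ((S.toFunctor ⋙ S.toFunctor).map (↾f) x)) = _
          rw [NatTrans.naturality_apply S.μ (↾f) x, toU_natural])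
        (fun {X Y} f x => ?_) x
      show joinM (toU S.toFunctor (S.toFunctor.map _ (S.toFunctor.map (S.toFunctor.map (↾f)) x)))
        = Ultrafilter.map f (joinM (toU S.toFunctor (S.toFunctor.map _ x)))
      have h1 : S.toFunctor.map (↾(fun y => toU S.toFunctor (X := Y) y))
            (S.toFunctor.map (S.toFunctor.map (↾f)) x)
          = S.toFunctor.map (↾(Ultrafilter.map f))
            (S.toFunctor.map (↾(fun y => toU S.toFunctor (X := X) y)) x) := by
        rw [← FunctorToTypes.map_comp_apply, ← FunctorToTypes.map_comp_apply]
        have h2 : (S.toFunctor.map (↾f) ≫ ↾(fun y => toU S.toFunctor (X := Y) y))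
            = (↾(fun y => toU S.toFunctor (X := X) y) ≫ ↾(Ultrafilter.map f)) :=
          ConcreteCategory.hom_ext _ _ fun y => toU_natural S.toFunctor f y
        rw [h2]
      rw [h1, toU_natural]
      exact types_congr_hom ((ofTypeMonad Ultrafilter.{u}).μ.naturality (↾f))
        (toU S.toFunctor (X := Ultrafilter X) (S.toFunctor.map (↾(fun y => toU S.toFunctor (X := X) y)) x))
    let φ : MonadHom S (ofTypeMonad Ultrafilter.{u}) :=
      { toNatTrans := φnat
        app_η := fun X => ConcreteCategory.hom_ext _ _ fun x => happη X x
        app_μ := fun X => ConcreteCategory.hom_ext _ _ fun x => happμ X x }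
    refine ⟨φ, fun ψ => ?_⟩
    apply MonadHom.ext
    funext X; apply ConcreteCategory.hom_ext; intro x
    exact natural_unique (cov_of_preserves S.toFunctor)
      (fun X x => ψ.app X x) (fun X x => φ.app X x)
      (fun f x => NatTrans.naturality_apply ψ.toNatTrans (↾f) x)
      (fun f x => NatTrans.naturality_apply φ.toNatTrans (↾f) x) x
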